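/- For all n ∈ ℕ and all k₁, k₂ ∈ ℕ, the circular Laguerre polynomials satisfy the semigroup property L_{n,k₁} ⊠ₙ L_{n,k₂} = L_{n,k₁+k₂}, and moreover L_{n,0}(z) = (z − 1)^n. -/

import Mathlib

/-- The finite free multiplicative convolution `⊠ₙ` of two polynomials of degree at most `n`:
`(p ⊠ₙ q)(z) = ∑_{j=0}^n (−1)^{n−j} (α_j β_j / C(n,j)) z^j`. -/
noncomputable def ffmc (n : ℕ) (p q : Polynomial ℂ) : Polynomial ℂ :=
  ∑ j ∈ Finset.range (n + 1),
    Polynomial.C ((-1) ^ (n - j) * p.coeff j * q.coeff j / (n.choose j : ℂ)) * Polynomial.X ^ j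

/-- The circular Laguerre polynomial
`L_{n,k}(z) = i^k ∑_{j=0}^n (−1)^{n−j} C(n,j) (j − n/2)^k z^j`. -/
noncomputable def circLaguerre (n k : ℕ) : Polynomial ℂ :=
  ∑ j ∈ Finset.range (n + 1),
    Polynomial.C (Complex.I ^ k * (-1) ^ (n - j) * (n.choose j : ℂ) * ((j : ℂ) - n / 2) ^ k) *
      Polynomial.X ^ j
/-! Up to the sign and binomial normalisation `(-1)^(n-j) C(n,j)`, which `⊠ₙ` divides out, the
`j`-th coefficient of `L_{n,k}` is `(i (j - n/2))^k`; convolving multiplies these coefficient-wise,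
so the exponents add. For `k = 0` the coefficients are those of the binomial expansion of
`(z - 1)^n`. -/

open Polynomial

lemma coeff_circLaguerre (n k : ℕ) {j : ℕ} (hj : j ≤ n) :
    (circLaguerre n k).coeff j
      = Complex.I ^ k * (-1) ^ (n - j) * (n.choose j : ℂ) * ((j : ℂ) - n / 2) ^ k := by
  simp only [circLaguerre, finsetSum_coeff, coeff_C_mul_X_pow]
  simp [hj]

theorem ffmc_circLaguerre (n k₁ k₂ : ℕ) :
    ffmc n (circLaguerre n k₁) (circLaguerre n k₂) = circLaguerre n (k₁ + k₂) := by
  refine Finset.sum_congr rfl fun j hj => ?_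
  have hjn : j ≤ n := Finset.mem_range_succ_iff.mp hj
  have hchoose : (n.choose j : ℂ) ≠ 0 := Nat.cast_ne_zero.mpr (Nat.choose_pos hjn).ne'
  have hsign : ((-1 : ℂ) ^ (n - j)) ^ 2 = 1 := by
    rw [← pow_mul, pow_mul', neg_one_sq, one_pow]
  rw [coeff_circLaguerre n k₁ hjn, coeff_circLaguerre n k₂ hjn]
  congr 2
  rw [div_eq_iff hchoose, pow_add, pow_add]
  linear_combination (Complex.I ^ k₁ * Complex.I ^ k₂ * (-1) ^ (n - j) * (n.choose j : ℂ) ^ 2 *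
    ((j : ℂ) - n / 2) ^ k₁ * ((j : ℂ) - n / 2) ^ k₂) * hsign

theorem circLaguerre_zero (n : ℕ) : circLaguerre n 0 = (X - C 1) ^ n := by
  rw [sub_eq_add_neg, ← C_neg, as_sum_range_C_mul_X_pow ((X + C (-1 : ℂ)) ^ n),
    natDegree_pow_X_add_C, circLaguerre]
  refine Finset.sum_congr rfl fun j _ => ?_
  rw [coeff_X_add_C_pow]
  simp [mul_comm]

theorem stmt3 (n k₁ k₂ : ℕ) :
    ffmc n (circLaguerre n k₁) (circLaguerre n k₂) = circLaguerre n (k₁ + k₂) ∧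
    circLaguerre n 0 = (Polynomial.X - Polynomial.C (1 : ℂ)) ^ n :=
  ⟨ffmc_circLaguerre n k₁ k₂, circLaguerre_zero n⟩
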